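/- arXiv:2409.01942 — 5 statements merged into one kernel-verified Lean document; each statement's English description precedes it below -/
import Mathlib

section
/- (Separability Lemma) Let G=(U,V,E) be a bipartite graph, let π_U be a linear ordering of U, and let V₁, V₂ ⊆ V be disjoint subsets. Then there exists a constant γ(π_U,V₁,V₂) such that for every linear ordering π_V of V with V₁ ≺_{π_V} V₂, one has γ(π_U,V₁,V₂) = cr_{E(V₁)∪E(V₂)}(π_U,π_V) − cr_{E(V₁)}(π_U,π_V) − cr_{E(V₂)}(π_U,π_V). Equivalently, for any two linear orderings π'_V and π''_V of V, each having V₁ ≺ V₂, the value cr_{E(V₁)∪E(V₂)} − cr_{E(V₁)} − cr_{E(V₂)} is the same for (π_U,π'_V) and (π_U,π''_V). -/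
open Finset

/-- Two edges `e₁ = (u₁, v₁)` and `e₂ = (u₂, v₂)` of a bipartite graph
`G = (U, V, E ⊆ U × V)` cross in the 2-level drawing `(πU, πV)`:
`u₁ ≠ u₂`, `v₁ ≠ v₂`, and either `πU u₁ < πU u₂` and `πV v₂ < πV v₁`, or
`πU u₂ < πU u₁` and `πV v₁ < πV v₂`. -/
def Cross {U V : Type*} [Fintype U] [Fintype V]
    (πU : U ≃ Fin (Fintype.card U)) (πV : V ≃ Fin (Fintype.card V))
    (e₁ e₂ : U × V) : Prop :=
  e₁.1 ≠ e₂.1 ∧ e₁.2 ≠ e₂.2 ∧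
    ((πU e₁.1 < πU e₂.1 ∧ πV e₂.2 < πV e₁.2) ∨
     (πU e₂.1 < πU e₁.1 ∧ πV e₁.2 < πV e₂.2))

/-- `E(W)`: the set of edges of `E` whose endpoint in the free layer lies in `W`. -/
noncomputable def edgesIn {U V : Type*} (E : Finset (U × V)) (W : Finset V) :
    Finset (U × V) := by
  classical exact E.filter fun e => e.2 ∈ W

/-- `cr_S(πU, πV)`: the number of distinct unordered pairs of edges of `S` that
cross in `(πU, πV)`.  Since two crossing edges have distinct `U`-endpoints, each
unordered crossing pair is counted exactly once by counting the ordered pairs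
`(e₁, e₂)` that cross and satisfy `πU e₁.1 < πU e₂.1`. -/
noncomputable def cr {U V : Type*} [Fintype U] [Fintype V]
    (πU : U ≃ Fin (Fintype.card U)) (πV : V ≃ Fin (Fintype.card V))
    (S : Finset (U × V)) : ℕ := by
  classical exact
    ((S ×ˢ S).filter fun p => Cross πU πV p.1 p.2 ∧ πU p.1.1 < πU p.2.1).card

/-- `V₁ ≺_{πV} V₂`: every vertex of `V₁` precedes every vertex of `V₂` in `πV`. -/
def Precedes {V : Type*} [Fintype V] (πV : V ≃ Fin (Fintype.card V))
    (V₁ V₂ : Finset V) : Prop :=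
  ∀ v₁ ∈ V₁, ∀ v₂ ∈ V₂, πV v₁ < πV v₂

open scoped Classical in
/-- Separability Lemma: for a fixed `πU` and disjoint
`V₁, V₂ ⊆ V`, there is a constant `γ(πU, V₁, V₂)` such that for every linear
ordering `πV` of `V` with `V₁ ≺_{πV} V₂`,
`γ(πU, V₁, V₂) = cr_{E(V₁) ∪ E(V₂)}(πU, πV) − cr_{E(V₁)}(πU, πV) − cr_{E(V₂)}(πU, πV)`. -/
theorem separability {U V : Type*} [Fintype U] [Fintype V]
    (E : Finset (U × V)) (πU : U ≃ Fin (Fintype.card U))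
    (V₁ V₂ : Finset V) (hdisj : Disjoint V₁ V₂) :
    ∃ γ : ℤ, ∀ πV : V ≃ Fin (Fintype.card V), Precedes πV V₁ V₂ →
      γ = (cr πU πV (edgesIn E V₁ ∪ edgesIn E V₂) : ℤ) -
            (cr πU πV (edgesIn E V₁) : ℤ) - (cr πU πV (edgesIn E V₂) : ℤ) := by
  classical
  set A := edgesIn E V₁ with hA
  set B := edgesIn E V₂ with hB
  have hA2 : ∀ p ∈ A, p.2 ∈ V₁ := by
    intro p hp; rw [hA, edgesIn] at hp; exact (Finset.mem_filter.mp hp).2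
  have hB2 : ∀ p ∈ B, p.2 ∈ V₂ := by
    intro p hp; rw [hB, edgesIn] at hp; exact (Finset.mem_filter.mp hp).2
  refine ⟨(((B ×ˢ A).filter fun p => πU p.1.1 < πU p.2.1).card : ℤ), ?_⟩
  intro πV hprec
  set P : (U × V) × (U × V) → Prop :=
    fun p => Cross πU πV p.1 p.2 ∧ πU p.1.1 < πU p.2.1 with hP
  have key : ((A ∪ B) ×ˢ (A ∪ B)).filter P =
      ((A ×ˢ A).filter P ∪ (B ×ˢ B).filter P) ∪ (B ×ˢ A).filter P := by
    ext p
    simp only [Finset.mem_filter, Finset.mem_union, Finset.mem_product]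
    constructor
    · rintro ⟨⟨h1 | h1, h2 | h2⟩, hp⟩
      · exact Or.inl (Or.inl ⟨⟨h1, h2⟩, hp⟩)
      · exfalso
        have hv := hprec _ (hA2 _ h1) _ (hB2 _ h2)
        rcases hp.1.2.2 with ⟨_, h⟩ | ⟨h, _⟩
        · exact absurd hv (not_lt.mpr h.le)
        · exact absurd hp.2 (not_lt.mpr h.le)
      · exact Or.inr ⟨⟨h1, h2⟩, hp⟩
      · exact Or.inl (Or.inr ⟨⟨h1, h2⟩, hp⟩)
    · rintro ((⟨⟨h1, h2⟩, hp⟩ | ⟨⟨h1, h2⟩, hp⟩) | ⟨⟨h1, h2⟩, hp⟩)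
      · exact ⟨⟨Or.inl h1, Or.inl h2⟩, hp⟩
      · exact ⟨⟨Or.inr h1, Or.inr h2⟩, hp⟩
      · exact ⟨⟨Or.inr h1, Or.inl h2⟩, hp⟩
  have hBA : (B ×ˢ A).filter P = (B ×ˢ A).filter fun p => πU p.1.1 < πU p.2.1 := by
    apply Finset.filter_congr
    intro p hp
    rw [Finset.mem_product] at hp
    have hv1 : p.2.2 ∈ V₁ := hA2 _ hp.2
    have hv2 : p.1.2 ∈ V₂ := hB2 _ hp.1
    have hvlt : πV p.2.2 < πV p.1.2 := hprec _ hv1 _ hv2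
    constructor
    · exact fun h => h.2
    · intro h
      refine ⟨⟨fun hu => absurd h ?_, fun hv => ?_, Or.inl ⟨h, hvlt⟩⟩, h⟩
      · rw [hu]; exact lt_irrefl _
      · exact Finset.disjoint_left.mp hdisj hv1 (hv ▸ hv2)
  have hd1 : Disjoint ((A ×ˢ A).filter P) ((B ×ˢ B).filter P) := by
    rw [Finset.disjoint_left]
    intro p hp hq
    have h1 := (Finset.mem_product.mp (Finset.mem_filter.mp hp).1).1
    have h2 := (Finset.mem_product.mp (Finset.mem_filter.mp hq).1).1
    exact Finset.disjoint_left.mp hdisj (hA2 _ h1) (hB2 _ h2)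
  have hd2 : Disjoint ((A ×ˢ A).filter P ∪ (B ×ˢ B).filter P) ((B ×ˢ A).filter P) := by
    rw [Finset.disjoint_left]
    intro p hp hq
    have hq1 := (Finset.mem_product.mp (Finset.mem_filter.mp hq).1).1
    have hq2 := (Finset.mem_product.mp (Finset.mem_filter.mp hq).1).2
    rcases Finset.mem_union.mp hp with h | h
    · have h1 := (Finset.mem_product.mp (Finset.mem_filter.mp h).1).1
      exact Finset.disjoint_left.mp hdisj (hA2 _ h1) (hB2 _ hq1)
    · have h2 := (Finset.mem_product.mp (Finset.mem_filter.mp h).1).2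
      exact Finset.disjoint_left.mp hdisj (hA2 _ hq2) (hB2 _ h2)
  have hcr : ∀ S : Finset (U × V), cr πU πV S = ((S ×ˢ S).filter P).card := by
    intro S; rw [cr]
  have hsum : cr πU πV (A ∪ B) = cr πU πV A + cr πU πV B +
      ((B ×ˢ A).filter fun p => πU p.1.1 < πU p.2.1).card := by
    rw [hcr, hcr, hcr, key, Finset.card_union_of_disjoint hd2,
      Finset.card_union_of_disjoint hd1, hBA]
  rw [hsum]
  push_cast
  ring
end

section
/- Let G=(U,V,E) be a bipartite graph with a fixed linear ordering π_U of U, and let S ⊆ V and W ⊆ S. Then OPT(S) ≤ OPT(W) + OPT(S∖W) + γ(π_U, W, S∖W), where γ(π_U, W, S∖W) is the number of pairs of edges ((u₁,v₁),(u₂,v₂)) ∈ E(W) × E(S∖W) with π_U(u₂) < π_U(u₁). -/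
open Finset

/-- `γ(πU, V₁, V₂)`: the number of pairs of edges
`((u₁, v₁), (u₂, v₂)) ∈ E(V₁) × E(V₂)` with `πU u₂ < πU u₁`; by the
separability lemma this is the number of crossings between an edge of `E(V₁)`
and an edge of `E(V₂)` in any 2-level drawing `(πU, πV)` with `V₁ ≺_{πV} V₂`. -/
noncomputable def gammaCr {U V : Type*} [Fintype U] (E : Finset (U × V))
    (πU : U ≃ Fin (Fintype.card U)) (V₁ V₂ : Finset V) : ℕ := by
  classical exact
    ((edgesIn E V₁ ×ˢ edgesIn E V₂).filter fun p => πU p.2.1 < πU p.1.1).card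

/-- `OPT(S)`: the minimum over all linear orderings `πV` of `V` of
`cr_{E(S)}(πU, πV)`. -/
noncomputable def OPT {U V : Type*} [Fintype U] [Fintype V] (E : Finset (U × V))
    (πU : U ≃ Fin (Fintype.card U)) (S : Finset V) : ℕ :=
  sInf {c | ∃ πV : V ≃ Fin (Fintype.card V), c = cr πU πV (edgesIn E S)}

/-!
Take optimal orderings `σ` of `W` and `τ` of `S \ W` and concatenate them: first `W` in the
order `σ`, then all other vertices in the order `τ`. Crossings within `E(W)` or within
`E(S \ W)` depend only on the relative order of their endpoints in `V`, so they number `OPT(W)`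
and `OPT(S \ W)`. Since `W` comes first, an edge of `E(W)` and an edge of `E(S \ W)` cross
exactly when the `U`-endpoint of the second precedes that of the first, which is what `γ`
counts.
-/

lemma mem_edgesIn {U V : Type*} {E : Finset (U × V)} {W : Finset V} {e : U × V} :
    e ∈ edgesIn E W ↔ e ∈ E ∧ e.2 ∈ W := by
  classical simp [edgesIn]

lemma edgesIn_union {U V : Type*} [DecidableEq U] [DecidableEq V] (E : Finset (U × V))
    (W D : Finset V) :
    edgesIn E (W ∪ D) = edgesIn E W ∪ edgesIn E D := by
  ext e
  simp only [mem_union, mem_edgesIn, and_or_left]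

lemma exists_equivFin_lt_iff {V α : Type*} [Fintype V] [LinearOrder α] {f : V → α}
    (hf : Function.Injective f) :
    ∃ π : V ≃ Fin (Fintype.card V), ∀ a b, π a < π b ↔ f a < f b := by
  let _ : LinearOrder V := LinearOrder.lift' f hf
  exact ⟨(monoEquivOfFin V rfl).symm.toEquiv, fun _ _ => (monoEquivOfFin V rfl).symm.lt_iff_lt⟩

lemma exists_equivFin_append {V : Type*} [Fintype V] (σ τ : V ≃ Fin (Fintype.card V))
    (W : Finset V) :
    ∃ π : V ≃ Fin (Fintype.card V),
      (∀ a ∈ W, ∀ b ∈ W, π a < π b ↔ σ a < σ b) ∧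
      (∀ a ∉ W, ∀ b ∉ W, π a < π b ↔ τ a < τ b) ∧
      (∀ a ∈ W, ∀ b ∉ W, π a < π b) := by
  classical
  let f : V → Lex (Bool × Fin (Fintype.card V)) :=
    fun v => toLex (decide (v ∉ W), if v ∈ W then σ v else τ v)
  have hf : Function.Injective f := by
    intro a b hab
    simp only [f, toLex_inj, Prod.mk.injEq] at hab
    by_cases ha : a ∈ W <;> by_cases hb : b ∈ W <;> simp_all
  obtain ⟨π, hπ⟩ := exists_equivFin_lt_iff hf
  refine ⟨π, fun a ha b hb => ?_, fun a ha b hb => ?_, fun a ha b hb => ?_⟩ <;>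
    simp [hπ, f, Prod.Lex.toLex_lt_toLex, ha, hb]

section Drawing

variable {U V : Type*} [Fintype U] [Fintype V] (πU : U ≃ Fin (Fintype.card U))

lemma cr_congr {πV σ : V ≃ Fin (Fintype.card V)} {A : Finset (U × V)}
    (h : ∀ e ∈ A, ∀ g ∈ A, (πV e.2 < πV g.2 ↔ σ e.2 < σ g.2)) :
    cr πU πV A = cr πU σ A := by
  classical
  unfold cr
  congr 1
  refine filter_congr fun p hp => ?_
  rw [mem_product] at hp
  simp only [Cross, h _ hp.1 _ hp.2, h _ hp.2 _ hp.1]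

lemma cr_union_le_of_lt [DecidableEq U] [DecidableEq V] {πV : V ≃ Fin (Fintype.card V)}
    {A B : Finset (U × V)} (hAB : ∀ a ∈ A, ∀ b ∈ B, πV a.2 < πV b.2) :
    cr πU πV (A ∪ B) ≤
      cr πU πV A + cr πU πV B + #{p ∈ A ×ˢ B | πU p.2.1 < πU p.1.1} := by
  classical
  unfold cr
  refine (card_le_card (t := {p ∈ A ×ˢ A | Cross πU πV p.1 p.2 ∧ πU p.1.1 < πU p.2.1} ∪
      {p ∈ B ×ˢ B | Cross πU πV p.1 p.2 ∧ πU p.1.1 < πU p.2.1} ∪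
      {p ∈ A ×ˢ B | πU p.2.1 < πU p.1.1}.image Prod.swap) ?_).trans
    ((card_union_le _ _).trans (add_le_add (card_union_le _ _) card_image_le))
  rintro ⟨e, g⟩ hp
  simp only [mem_filter, mem_product, mem_union] at hp
  obtain ⟨⟨he | he, hg | hg⟩, hcr⟩ := hp
  · exact mem_union_left _ (mem_union_left _ (mem_filter.2 ⟨mem_product.2 ⟨he, hg⟩, hcr⟩))
  · exfalso
    obtain ⟨⟨-, -, ⟨-, hv⟩ | ⟨hu', -⟩⟩, hu⟩ := hcr
    · exact (hAB e he g hg).asymm hv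
    · exact hu.asymm hu'
  · exact mem_union_right _
      (mem_image.2 ⟨(g, e), mem_filter.2 ⟨mem_product.2 ⟨hg, he⟩, hcr.2⟩, rfl⟩)
  · exact mem_union_left _ (mem_union_right _ (mem_filter.2 ⟨mem_product.2 ⟨he, hg⟩, hcr⟩))

lemma cr_edgesIn_congr (E : Finset (U × V)) {πV σ : V ≃ Fin (Fintype.card V)} {W : Finset V}
    (h : ∀ a ∈ W, ∀ b ∈ W, (πV a < πV b ↔ σ a < σ b)) :
    cr πU πV (edgesIn E W) = cr πU σ (edgesIn E W) :=
  cr_congr πU fun _ he _ hg => h _ (mem_edgesIn.1 he).2 _ (mem_edgesIn.1 hg).2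

lemma cr_edgesIn_union_le [DecidableEq U] [DecidableEq V] (E : Finset (U × V))
    {πV : V ≃ Fin (Fintype.card V)} {W D : Finset V} (h : Precedes πV W D) :
    cr πU πV (edgesIn E (W ∪ D)) ≤
      cr πU πV (edgesIn E W) + cr πU πV (edgesIn E D) + gammaCr E πU W D := by
  rw [edgesIn_union]
  exact cr_union_le_of_lt πU fun _ ha _ hb => h _ (mem_edgesIn.1 ha).2 _ (mem_edgesIn.1 hb).2

lemma OPT_le_cr (E : Finset (U × V)) (πV : V ≃ Fin (Fintype.card V)) (S : Finset V) :
    OPT E πU S ≤ cr πU πV (edgesIn E S) :=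
  Nat.sInf_le ⟨πV, rfl⟩

lemma exists_cr_eq_OPT (E : Finset (U × V)) (S : Finset V) :
    ∃ πV : V ≃ Fin (Fintype.card V), cr πU πV (edgesIn E S) = OPT E πU S := by
  obtain ⟨πV, h⟩ := Nat.sInf_mem (⟨_, Fintype.equivFin V, rfl⟩ :
    {c | ∃ πV : V ≃ Fin (Fintype.card V), c = cr πU πV (edgesIn E S)}.Nonempty)
  exact ⟨πV, h.symm⟩

end Drawing

open scoped Classical in
/-- for `W ⊆ S ⊆ V`,
`OPT(S) ≤ OPT(W) + OPT(S \ W) + γ(πU, W, S \ W)`. -/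
theorem OPT_le_split {U V : Type*} [Fintype U] [Fintype V]
    (E : Finset (U × V)) (πU : U ≃ Fin (Fintype.card U))
    (S W : Finset V) (hWS : W ⊆ S) :
    OPT E πU S ≤ OPT E πU W + OPT E πU (S \ W) + gammaCr E πU W (S \ W) := by
  obtain ⟨σ, hσ⟩ := exists_cr_eq_OPT πU E W
  obtain ⟨τ, hτ⟩ := exists_cr_eq_OPT πU E (S \ W)
  obtain ⟨πV, hσW, hτW, hWfirst⟩ := exists_equivFin_append σ τ W
  calc OPT E πU S ≤ cr πU πV (edgesIn E (W ∪ S \ W)) := by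
        rw [union_sdiff_of_subset hWS]
        exact OPT_le_cr πU E πV S
    _ ≤ cr πU πV (edgesIn E W) + cr πU πV (edgesIn E (S \ W)) + gammaCr E πU W (S \ W) :=
        cr_edgesIn_union_le πU E fun a ha b hb => hWfirst a ha b (mem_sdiff.1 hb).2
    _ = OPT E πU W + OPT E πU (S \ W) + gammaCr E πU W (S \ W) := by
        rw [cr_edgesIn_congr πU E hσW, ← hσ, ← hτ,
          cr_edgesIn_congr πU E fun a ha b hb => hτW a (mem_sdiff.1 ha).2 b (mem_sdiff.1 hb).2]
end

section
/- (Divide-and-conquer recurrence for OSCM) Let G=(U,V,E) be a bipartite graph with a fixed linear ordering π_U of U. Then for every S ⊆ V with |S| ≥ 2, OPT(S) = min over subsets W ⊆ S with |W| = ⌈|S|/2⌉ of (OPT(W) + OPT(S∖W) + γ(π_U, W, S∖W)), where γ(π_U, W, S∖W) is the number of pairs of edges ((u₁,v₁),(u₂,v₂)) ∈ E(W) × E(S∖W) with π_U(u₂) < π_U(u₁). -/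
open Finset

open scoped Classical

private lemma cr_congr_s7 {U V : Type*} [Fintype U] [Fintype V]
    (E : Finset (U × V)) (πU : U ≃ Fin (Fintype.card U))
    (πV πV' : V ≃ Fin (Fintype.card V)) (W : Finset V)
    (h : ∀ v ∈ W, ∀ v' ∈ W, (πV v < πV v' ↔ πV' v < πV' v')) :
    cr πU πV (edgesIn E W) = cr πU πV' (edgesIn E W) := by
  unfold cr
  congr 1
  apply Finset.filter_congr
  intro p hp
  rw [Finset.mem_product] at hp
  have h1 : p.1.2 ∈ W := (Finset.mem_filter.mp hp.1).2
  have h2 : p.2.2 ∈ W := (Finset.mem_filter.mp hp.2).2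
  have ha := h p.2.2 h2 p.1.2 h1
  have hb := h p.1.2 h1 p.2.2 h2
  unfold Cross
  tauto

private lemma disjoint_prod_left {α β : Type*}
    {s₁ s₂ : Finset α} (t₁ t₂ : Finset β) (h : Disjoint s₁ s₂) :
    Disjoint (s₁ ×ˢ t₁) (s₂ ×ˢ t₂) := by
  rw [Finset.disjoint_left]
  intro p hp1 hp2
  rw [Finset.mem_product] at hp1 hp2
  exact (Finset.disjoint_left.mp h hp1.1) hp2.1

private lemma cr_decomp {U V : Type*} [Fintype U] [Fintype V]
    (E : Finset (U × V)) (πU : U ≃ Fin (Fintype.card U))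
    (πV : V ≃ Fin (Fintype.card V)) (S₀ W₁ W₂ : Finset V)
    (hcov : ∀ v, v ∈ S₀ ↔ v ∈ W₁ ∨ v ∈ W₂)
    (hd : Disjoint W₁ W₂) (hp : Precedes πV W₁ W₂) :
    cr πU πV (edgesIn E S₀) =
      cr πU πV (edgesIn E W₁) + cr πU πV (edgesIn E W₂) + gammaCr E πU W₁ W₂ := by
  set A := edgesIn E W₁ with hA
  set B := edgesIn E W₂ with hB
  have hmemA : ∀ e ∈ A, e.2 ∈ W₁ := fun e he => (Finset.mem_filter.mp he).2
  have hmemB : ∀ e ∈ B, e.2 ∈ W₂ := fun e he => (Finset.mem_filter.mp he).2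
  have hAB : Disjoint A B := by
    rw [Finset.disjoint_left]
    intro e heA heB
    exact (Finset.disjoint_left.mp hd (hmemA e heA)) (hmemB e heB)
  have hunion : edgesIn E S₀ = A ∪ B := by
    ext e
    simp only [hA, hB, edgesIn, Finset.mem_filter, Finset.mem_union, hcov e.2]
    tauto
  set P : (U × V) × (U × V) → Prop :=
    fun p => Cross πU πV p.1 p.2 ∧ πU p.1.1 < πU p.2.1 with hP
  have hcr : ∀ C : Finset (U × V), cr πU πV C = ((C ×ˢ C).filter P).card :=
    fun C => rfl
  have hsplit : (A ∪ B) ×ˢ (A ∪ B) = ((A ×ˢ A) ∪ (A ×ˢ B)) ∪ ((B ×ˢ A) ∪ (B ×ˢ B)) := by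
    rw [Finset.union_product, Finset.product_union, Finset.product_union]
  -- mixed part A × B is crossing-free
  have hABempty : (A ×ˢ B).filter P = ∅ := by
    rw [Finset.filter_eq_empty_iff]
    rintro p hpm
    rw [Finset.mem_product] at hpm
    rintro ⟨⟨-, -, hc⟩, hu⟩
    have hv : πV p.1.2 < πV p.2.2 := hp p.1.2 (hmemA _ hpm.1) p.2.2 (hmemB _ hpm.2)
    rcases hc with ⟨-, h2⟩ | ⟨h1, -⟩
    · exact absurd hv (not_lt.mpr (le_of_lt h2))
    · exact absurd hu (not_lt.mpr (le_of_lt h1))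
  -- mixed part B × A counts exactly gammaCr
  have hBA : ((B ×ˢ A).filter P).card = gammaCr E πU W₁ W₂ := by
    unfold gammaCr
    rw [← hA, ← hB]
    refine Finset.card_bij' (fun p _ => (p.2, p.1)) (fun p _ => (p.2, p.1))
      ?_ ?_ (fun a ha => rfl) (fun a ha => rfl)
    · rintro ⟨e₁, e₂⟩ hq
      rw [Finset.mem_filter, Finset.mem_product] at hq
      obtain ⟨⟨h1, h2⟩, ⟨-, -, -⟩, hu⟩ := hq
      rw [Finset.mem_filter, Finset.mem_product]
      exact ⟨⟨h2, h1⟩, hu⟩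
    · rintro ⟨e₁, e₂⟩ hq
      rw [Finset.mem_filter, Finset.mem_product] at hq
      obtain ⟨⟨h1, h2⟩, hu⟩ := hq
      rw [Finset.mem_filter, Finset.mem_product]
      have hne1 : e₂.1 ≠ e₁.1 := fun hc => absurd (congrArg πU hc) (ne_of_lt hu)
      have hne2 : e₂.2 ≠ e₁.2 := fun hc =>
        (Finset.disjoint_left.mp hd (hmemA _ h1)) (hc ▸ hmemB _ h2)
      have hvv : πV e₁.2 < πV e₂.2 := hp e₁.2 (hmemA _ h1) e₂.2 (hmemB _ h2)
      exact ⟨⟨h2, h1⟩, ⟨hne1, hne2, Or.inl ⟨hu, hvv⟩⟩, hu⟩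
  have hd1 : Disjoint ((A ×ˢ A) ∪ (A ×ˢ B)) ((B ×ˢ A) ∪ (B ×ˢ B)) := by
    rw [Finset.disjoint_union_left, Finset.disjoint_union_right,
      Finset.disjoint_union_right]
    exact ⟨⟨disjoint_prod_left _ _ hAB, disjoint_prod_left _ _ hAB⟩,
      ⟨disjoint_prod_left _ _ hAB, disjoint_prod_left _ _ hAB⟩⟩
  have hd2 : Disjoint (A ×ˢ A) (A ×ˢ B) := by
    rw [Finset.disjoint_left]
    intro p hp1 hp2
    rw [Finset.mem_product] at hp1 hp2
    exact (Finset.disjoint_left.mp hAB hp1.2) hp2.2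
  have hd3 : Disjoint (B ×ˢ A) (B ×ˢ B) := by
    rw [Finset.disjoint_left]
    intro p hp1 hp2
    rw [Finset.mem_product] at hp1 hp2
    exact (Finset.disjoint_left.mp hAB hp1.2) hp2.2
  rw [hunion, hcr, hcr, hcr, hsplit, Finset.filter_union,
    Finset.card_union_of_disjoint (Finset.disjoint_filter_filter hd1),
    Finset.filter_union, Finset.filter_union,
    Finset.card_union_of_disjoint (Finset.disjoint_filter_filter hd2),
    Finset.card_union_of_disjoint (Finset.disjoint_filter_filter hd3),
    hABempty, hBA]
  simp [add_comm, add_left_comm]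

/-- An injective `ℕ`-valued key function can be realized by a linear
ordering of `V`. -/
private lemma exists_equiv_of_inj {V : Type*} [Fintype V] (f : V → ℕ)
    (hf : Function.Injective f) :
    ∃ π : V ≃ Fin (Fintype.card V), ∀ a b : V, (π a < π b ↔ f a < f b) := by
  letI : LinearOrder V := LinearOrder.lift' f hf
  refine ⟨(monoEquivOfFin V rfl).symm.toEquiv, fun a b => ?_⟩
  have h1 : (monoEquivOfFin V rfl).symm a < (monoEquivOfFin V rfl).symm b ↔ a < b :=
    (monoEquivOfFin V rfl).symm.lt_iff_lt
  have h2 : a < b ↔ f a < f b := by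
    rw [lt_iff_le_not_ge, lt_iff_le_not_ge]
    exact Iff.rfl
  exact h1.trans h2

/-- A finite set `S` has a subset consisting of its `k` first elements with
respect to any linear ordering `π`. -/
private lemma exists_first_k {V : Type*} [Fintype V]
    (π : V ≃ Fin (Fintype.card V)) (S : Finset V) (k : ℕ) (hk : k ≤ S.card) :
    ∃ W, W ⊆ S ∧ W.card = k ∧ ∀ v₁ ∈ W, ∀ v₂ ∈ S, v₂ ∉ W → π v₁ < π v₂ := by
  letI : LinearOrder V := LinearOrder.lift' (fun v => π v) π.injective
  have hle0 : ∀ a b : V, a ≤ b ↔ π a ≤ π b := fun a b => Iff.rfl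
  set l := S.sort (· ≤ ·) with hl
  have hlnd : l.Nodup := S.sort_nodup _
  have hllen : l.length = S.card := S.length_sort _
  have hlsort : l.Pairwise (· ≤ ·) := S.pairwise_sort _
  have htknd : (l.take k).Nodup := hlnd.sublist (List.take_sublist k l)
  refine ⟨(l.take k).toFinset, ?_, ?_, ?_⟩
  · intro v hv
    rw [List.mem_toFinset] at hv
    have hvl : v ∈ l := List.mem_of_mem_take hv
    rwa [hl, Finset.mem_sort] at hvl
  · rw [List.toFinset_card_of_nodup htknd, List.length_take, hllen]
    omega
  · intro v₁ hv1 v₂ hv2 hv2'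
    have hv1' : v₁ ∈ l.take k := List.mem_toFinset.mp hv1
    have hv2d : v₂ ∈ l.drop k := by
      have hvl : v₂ ∈ l := by rw [hl, Finset.mem_sort]; exact hv2
      have hvl' : v₂ ∈ l.take k ++ l.drop k := by rwa [List.take_append_drop]
      rcases List.mem_append.mp hvl' with h | h
      · exact absurd (List.mem_toFinset.mpr h) hv2'
      · exact h
    have hpair : ∀ a ∈ l.take k, ∀ b ∈ l.drop k, a ≤ b := by
      have hs := hlsort
      rw [← List.take_append_drop k l] at hs
      exact fun a ha b hb => (List.pairwise_append.mp hs).2.2 a ha b hb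
    have hle12 : π v₁ ≤ π v₂ := (hle0 _ _).mp (hpair _ hv1' _ hv2d)
    have hne12 : v₁ ≠ v₂ := fun hc => hv2' (hc ▸ hv1)
    exact lt_of_le_of_ne hle12 (fun hc => hne12 (π.injective hc))

open scoped Classical in
/-- divide-and-conquer recurrence for OSCM: for every `S ⊆ V`
with `|S| ≥ 2`,
`OPT(S) = min_{W ⊆ S, |W| = ⌈|S|/2⌉} (OPT(W) + OPT(S \ W) + γ(πU, W, S \ W))`.
Here `⌈|S|/2⌉ = (S.card + 1) / 2` in natural-number arithmetic. -/
theorem OPT_dc_recurrence {U V : Type*} [Fintype U] [Fintype V]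
    (E : Finset (U × V)) (πU : U ≃ Fin (Fintype.card U))
    (S : Finset V) (hS : 2 ≤ S.card) :
    OPT E πU S =
      sInf {c | ∃ W ⊆ S, W.card = (S.card + 1) / 2 ∧
        c = OPT E πU W + OPT E πU (S \ W) + gammaCr E πU W (S \ W)} := by
  have hkS : (S.card + 1) / 2 ≤ S.card := by omega
  obtain ⟨W₀, hW₀S, hW₀card⟩ := Finset.exists_subset_card_eq hkS
  apply le_antisymm
  · -- `OPT S` is at most every candidate split value
    refine le_csInf ⟨_, ⟨W₀, hW₀S, hW₀card, rfl⟩⟩ ?_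
    rintro c ⟨W, hWS, hWcard, rfl⟩
    have hne1 : {c | ∃ πV : V ≃ Fin (Fintype.card V),
        c = cr πU πV (edgesIn E W)}.Nonempty := ⟨_, Fintype.equivFin V, rfl⟩
    have hne2 : {c | ∃ πV : V ≃ Fin (Fintype.card V),
        c = cr πU πV (edgesIn E (S \ W))}.Nonempty := ⟨_, Fintype.equivFin V, rfl⟩
    obtain ⟨πV₁, hπV₁⟩ : ∃ πV₁ : V ≃ Fin (Fintype.card V),
        OPT E πU W = cr πU πV₁ (edgesIn E W) := Nat.sInf_mem hne1
    obtain ⟨πV₂, hπV₂⟩ : ∃ πV₂ : V ≃ Fin (Fintype.card V),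
        OPT E πU (S \ W) = cr πU πV₂ (edgesIn E (S \ W)) := Nat.sInf_mem hne2
    set f : V → ℕ := fun v =>
      if v ∈ W then (πV₁ v : ℕ) else if v ∈ S then Fintype.card V + (πV₂ v : ℕ)
      else 2 * Fintype.card V + (πV₂ v : ℕ) with hfdef
    have hb1 : ∀ v : V, (πV₁ v : ℕ) < Fintype.card V := fun v => (πV₁ v).2
    have hb2 : ∀ v : V, (πV₂ v : ℕ) < Fintype.card V := fun v => (πV₂ v).2
    have hfinj : Function.Injective f := by
      intro a b hab
      simp only [hfdef] at hab
      split_ifs at hab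
      all_goals first
        | exact πV₁.injective (Fin.val_injective hab)
        | exact πV₂.injective (Fin.val_injective (by omega))
        | (exfalso; have := hb1 a; have := hb1 b; have := hb2 a; have := hb2 b; omega)
    obtain ⟨πV₃, hmono⟩ := exists_equiv_of_inj f hfinj
    have hagreeW : ∀ v ∈ W, ∀ v' ∈ W, (πV₃ v < πV₃ v' ↔ πV₁ v < πV₁ v') := by
      intro v hv v' hv'
      rw [hmono]
      simp only [hfdef, if_pos hv, if_pos hv']
      rw [Fin.lt_def]
    have hagreeSW : ∀ v ∈ S \ W, ∀ v' ∈ S \ W, (πV₃ v < πV₃ v' ↔ πV₂ v < πV₂ v') := by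
      intro v hv v' hv'
      rw [Finset.mem_sdiff] at hv hv'
      rw [hmono]
      simp only [hfdef, if_neg hv.2, if_pos hv.1, if_neg hv'.2, if_pos hv'.1]
      rw [Fin.lt_def]
      omega
    have hprec : Precedes πV₃ W (S \ W) := by
      intro v₁ hv1 v₂ hv2
      rw [Finset.mem_sdiff] at hv2
      rw [hmono]
      simp only [hfdef, if_pos hv1, if_neg hv2.2, if_pos hv2.1]
      have := hb1 v₁
      omega
    have hcov : ∀ v, v ∈ S ↔ v ∈ W ∨ v ∈ S \ W := by
      intro v
      rw [Finset.mem_sdiff]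
      constructor
      · intro hv
        by_cases hw : v ∈ W
        · exact Or.inl hw
        · exact Or.inr ⟨hv, hw⟩
      · rintro (hw | ⟨hv, -⟩)
        · exact hWS hw
        · exact hv
    have hdisj : Disjoint W (S \ W) := Finset.disjoint_sdiff
    calc OPT E πU S ≤ cr πU πV₃ (edgesIn E S) := Nat.sInf_le ⟨πV₃, rfl⟩
      _ = cr πU πV₃ (edgesIn E W) + cr πU πV₃ (edgesIn E (S \ W))
          + gammaCr E πU W (S \ W) :=
        cr_decomp E πU πV₃ S W (S \ W) hcov hdisj hprec
      _ = OPT E πU W + OPT E πU (S \ W) + gammaCr E πU W (S \ W) := by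
        rw [cr_congr_s7 E πU πV₃ πV₁ W hagreeW, cr_congr_s7 E πU πV₃ πV₂ (S \ W) hagreeSW,
          ← hπV₁, ← hπV₂]
  · -- the optimum ordering induces a balanced split of matching value
    have hne : {c | ∃ πV : V ≃ Fin (Fintype.card V),
        c = cr πU πV (edgesIn E S)}.Nonempty := ⟨_, Fintype.equivFin V, rfl⟩
    obtain ⟨πV₀, hπV₀⟩ : ∃ πV₀ : V ≃ Fin (Fintype.card V),
        OPT E πU S = cr πU πV₀ (edgesIn E S) := Nat.sInf_mem hne
    obtain ⟨W, hWS, hWcard, hfirst⟩ := exists_first_k πV₀ S ((S.card + 1) / 2) hkS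
    have hprec : Precedes πV₀ W (S \ W) := by
      intro v₁ hv1 v₂ hv2
      rw [Finset.mem_sdiff] at hv2
      exact hfirst v₁ hv1 v₂ hv2.1 hv2.2
    have hcov : ∀ v, v ∈ S ↔ v ∈ W ∨ v ∈ S \ W := by
      intro v
      rw [Finset.mem_sdiff]
      constructor
      · intro hv
        by_cases hw : v ∈ W
        · exact Or.inl hw
        · exact Or.inr ⟨hv, hw⟩
      · rintro (hw | ⟨hv, -⟩)
        · exact hWS hw
        · exact hv
    have hdisj : Disjoint W (S \ W) := Finset.disjoint_sdiff
    have hd : cr πU πV₀ (edgesIn E S) =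
        cr πU πV₀ (edgesIn E W) + cr πU πV₀ (edgesIn E (S \ W))
          + gammaCr E πU W (S \ W) :=
      cr_decomp E πU πV₀ S W (S \ W) hcov hdisj hprec
    have h1 : OPT E πU W ≤ cr πU πV₀ (edgesIn E W) := Nat.sInf_le ⟨πV₀, rfl⟩
    have h2 : OPT E πU (S \ W) ≤ cr πU πV₀ (edgesIn E (S \ W)) :=
      Nat.sInf_le ⟨πV₀, rfl⟩
    refine le_trans (Nat.sInf_le ⟨W, hWS, hWcard, rfl⟩) ?_
    rw [hπV₀, hd]
    omega
end

section
/- For every natural number d ≥ 1 there exist real constants B > 0 and c > 0 such that the following holds: every function Q : ℕ → ℝ≥0 satisfying Q(k) ≤ 1 for k ≤ 1 and Q(k) ≤ √(binom(k, ⌈k/2⌉)) · (Q(⌊k/2⌋) + Q(⌈k/2⌉) + k^d) for all k ≥ 2, satisfies Q(n) ≤ B · n^c · 2^n for all n ≥ 1. -/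
private lemma choose_le_two_pow' (n r : ℕ) : n.choose r ≤ 2 ^ n := by
  rcases le_or_gt r n with h | h
  · calc n.choose r ≤ ∑ m ∈ Finset.range (n+1), n.choose m :=
        Finset.single_le_sum (fun _ _ => Nat.zero_le _) (Finset.mem_range.mpr (by omega))
    _ = 2 ^ n := Nat.sum_range_choose n
  · simp [Nat.choose_eq_zero_of_lt h]

private lemma six_two_le_three (m : ℕ) (hm : 5 ≤ m) : 6 * 2 ^ m ≤ 3 ^ m := by
  induction m, hm using Nat.le_induction with
  | base => norm_num
  | succ n hn ih =>
    calc 6 * 2 ^ (n+1) = 2 * (6 * 2 ^ n) := by ring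
      _ ≤ 2 * 3 ^ n := by omega
      _ ≤ 3 ^ (n+1) := by ring_nf; omega

private lemma six_b_pow (m b k : ℕ) (hm : 5 ≤ m) (h : 3 * b ≤ 2 * k) :
    6 * b ^ m ≤ k ^ m := by
  have h1 : (3 * b) ^ m ≤ (2 * k) ^ m := Nat.pow_le_pow_left h m
  have h2 : 6 * 2 ^ m ≤ 3 ^ m := six_two_le_three m hm
  have h3 : 3 ^ m * (6 * b ^ m) ≤ 3 ^ m * k ^ m := by
    calc 3 ^ m * (6 * b ^ m) = 6 * ((3 * b) ^ m) := by rw [mul_pow]; ring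
      _ ≤ 6 * ((2 * k) ^ m) := by omega
      _ = (6 * 2 ^ m) * k ^ m := by rw [mul_pow]; ring
      _ ≤ 3 ^ m * k ^ m := Nat.mul_le_mul_right _ h2
  exact Nat.le_of_mul_le_mul_left h3 (by positivity)

/-- for every `d ≥ 1` there are constants `B, c > 0` such that
every `Q : ℕ → ℝ≥0` with `Q k ≤ 1` for `k ≤ 1` and
`Q k ≤ √(binom k ⌈k/2⌉) · (Q ⌊k/2⌋ + Q ⌈k/2⌉ + k^d)` for all `k ≥ 2`
satisfies `Q n ≤ B·n^c·2^n` for all `n ≥ 1`.  (Here `⌊k/2⌋ = k / 2` and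
`⌈k/2⌉ = (k + 1) / 2` in natural-number arithmetic.) -/
theorem quantum_dc_recurrence_bound (d : ℕ) (hd : 1 ≤ d) :
    ∃ B c : ℝ, 0 < B ∧ 0 < c ∧
      ∀ Q : ℕ → ℝ, (∀ k, 0 ≤ Q k) → (∀ k ≤ 1, Q k ≤ 1) →
        (∀ k, 2 ≤ k →
          Q k ≤ Real.sqrt (k.choose ((k + 1) / 2)) *
            (Q (k / 2) + Q ((k + 1) / 2) + (k : ℝ) ^ d)) →
        ∀ n, 1 ≤ n → Q n ≤ B * (n : ℝ) ^ c * 2 ^ n := by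
  set m : ℕ := max d 5 with hm
  refine ⟨2 ^ d, (m : ℝ), by positivity, by positivity, ?_⟩
  intro Q hQ0 hQ1 hrec n hn
  have key : ∀ n, 1 ≤ n → Q n ≤ 2 ^ d * (n : ℝ) ^ m * 2 ^ n := by
    intro n
    induction n using Nat.strong_induction_on with
    | _ k ih =>
      intro hk1
      rcases Nat.lt_or_ge k 2 with hk2 | hk2
      · -- k = 1
        have hk : k = 1 := by omega
        subst hk
        have h1 : Q 1 ≤ 1 := hQ1 1 le_rfl
        have : (1:ℝ) ≤ 2 ^ d * (1:ℝ) ^ m * 2 ^ 1 := by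
          have h1 : (1:ℝ) ≤ 2 ^ d := one_le_pow₀ (by norm_num)
          rw [one_pow]
          nlinarith
        simpa using h1.trans this
      · set a := k / 2 with ha
        set b := (k + 1) / 2 with hb
        have ha1 : 1 ≤ a := by omega
        have hb1 : 1 ≤ b := by omega
        have hak : a < k := by omega
        have hbk : b < k := by omega
        have hab : a ≤ b := by omega
        have hk2b : k ≤ 2 * b := by omega
        have h2bk : 2 * b ≤ k + 1 := by omega
        have h3b : 3 * b ≤ 2 * k := by omega
        have hdm : d ≤ m := le_max_left _ _
        have h5m : 5 ≤ m := le_max_right _ _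
        have iha := ih a hak ha1
        have ihb := ih b hbk hb1
        -- sqrt bound
        have hsqrt : Real.sqrt (k.choose b) ≤ 2 ^ b := by
          have h1 : (k.choose b : ℝ) ≤ ((2:ℝ) ^ b) ^ 2 := by
            rw [← pow_mul]
            calc (k.choose b : ℝ) ≤ (2:ℝ) ^ k := by
                  exact_mod_cast Nat.cast_le.mpr (choose_le_two_pow' k b)
              _ ≤ (2:ℝ) ^ (b * 2) := by
                  apply pow_le_pow_right₀ (by norm_num); omega
          calc Real.sqrt (k.choose b) ≤ Real.sqrt (((2:ℝ) ^ b) ^ 2) :=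
                Real.sqrt_le_sqrt h1
            _ = 2 ^ b := Real.sqrt_sq (by positivity)
        have hQr := hrec k hk2
        rw [← ha, ← hb] at hQr
        set B : ℝ := 2 ^ d with hB
        have hB1 : (1:ℝ) ≤ B := one_le_pow₀ (by norm_num)
        have hbr1 : (1:ℝ) ≤ (b:ℝ) := by exact_mod_cast hb1
        -- bound the inside
        have hQa : Q a ≤ B * (b:ℝ) ^ m * 2 ^ b := by
          refine iha.trans ?_
          have h1 : ((a:ℝ)) ^ m ≤ ((b:ℝ)) ^ m := by
            apply pow_le_pow_left₀ (by positivity); exact_mod_cast hab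
          have h2 : (2:ℝ) ^ a ≤ 2 ^ b := pow_le_pow_right₀ (by norm_num) hab
          have hBpos : 0 < B := by positivity
          exact mul_le_mul (mul_le_mul_of_nonneg_left h1 hBpos.le) h2
            (by positivity) (by positivity)
        have hQb : Q b ≤ B * (b:ℝ) ^ m * 2 ^ b := ihb
        have hkd : (k:ℝ) ^ d ≤ B * (b:ℝ) ^ m * 2 ^ b := by
          have h1 : (k:ℝ) ^ d ≤ ((2:ℝ) * b) ^ d := by
            apply pow_le_pow_left₀ (by positivity)
            exact_mod_cast hk2b
          have h2 : ((2:ℝ) * b) ^ d = B * (b:ℝ) ^ d := by rw [mul_pow]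
          have h3 : ((b:ℝ)) ^ d ≤ ((b:ℝ)) ^ m := pow_le_pow_right₀ hbr1 hdm
          have h4 : (1:ℝ) ≤ 2 ^ b := one_le_pow₀ (by norm_num)
          have hBpos : 0 < B := by positivity
          calc (k:ℝ) ^ d ≤ B * (b:ℝ) ^ d := by rw [← h2]; exact h1
            _ ≤ B * (b:ℝ) ^ m := mul_le_mul_of_nonneg_left h3 hBpos.le
            _ ≤ B * (b:ℝ) ^ m * 2 ^ b := le_mul_of_one_le_right (by positivity) h4
        have hsum : Q a + Q b + (k:ℝ) ^ d ≤ 3 * (B * (b:ℝ) ^ m * 2 ^ b) := by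
          linarith
        have hsum0 : 0 ≤ Q a + Q b + (k:ℝ) ^ d := by
          have := hQ0 a; have := hQ0 b
          positivity
        have step1 : Q k ≤ 2 ^ b * (3 * (B * (b:ℝ) ^ m * 2 ^ b)) := by
          refine hQr.trans ?_
          exact mul_le_mul hsqrt hsum hsum0 (by positivity)
        have step2 : (2:ℝ) ^ b * (3 * (B * (b:ℝ) ^ m * 2 ^ b)) ≤
            6 * B * (b:ℝ) ^ m * 2 ^ k := by
          have h1 : (2:ℝ) ^ b * 2 ^ b = 2 ^ (2 * b) := by
            rw [← pow_add]; ring_nf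
          have h2 : (2:ℝ) ^ (2 * b) ≤ 2 ^ (k + 1) :=
            pow_le_pow_right₀ (by norm_num) h2bk
          have h3 : (2:ℝ) ^ (k + 1) = 2 * 2 ^ k := by ring
          have hBpos : 0 < B := by positivity
          calc (2:ℝ) ^ b * (3 * (B * (b:ℝ) ^ m * 2 ^ b))
              = 3 * B * (b:ℝ) ^ m * (2 ^ b * 2 ^ b) := by ring
            _ = 3 * B * (b:ℝ) ^ m * 2 ^ (2 * b) := by rw [h1]
            _ ≤ 3 * B * (b:ℝ) ^ m * 2 ^ (k + 1) := by
                apply mul_le_mul_of_nonneg_left h2; positivity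
            _ = 6 * B * (b:ℝ) ^ m * 2 ^ k := by rw [h3]; ring
        have step3 : 6 * B * (b:ℝ) ^ m * 2 ^ k ≤ B * (k:ℝ) ^ m * 2 ^ k := by
          have h1 : 6 * (b:ℝ) ^ m ≤ (k:ℝ) ^ m := by
            exact_mod_cast Nat.cast_le.mpr (six_b_pow m b k h5m h3b)
          have hBpos : 0 < B := by positivity
          calc 6 * B * (b:ℝ) ^ m * 2 ^ k = (6 * (b:ℝ) ^ m) * (B * 2 ^ k) := by ring
            _ ≤ (k:ℝ) ^ m * (B * 2 ^ k) :=
                mul_le_mul_of_nonneg_right h1 (by positivity)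
            _ = B * (k:ℝ) ^ m * 2 ^ k := by ring
        calc Q k ≤ _ := step1
          _ ≤ _ := step2
          _ ≤ B * (k:ℝ) ^ m * 2 ^ k := step3
  rw [Real.rpow_natCast]
  exact key n hn
end

section
/- For every natural number d ≥ 1 there exist real constants B > 0 and c > 0 such that the following holds: every function T : ℕ → ℝ≥0 satisfying T(k) ≤ 1 for k ≤ 1 and T(k) ≤ binom(k, ⌈k/2⌉) · (T(⌊k/2⌋) + T(⌈k/2⌉) + k^d) for all k ≥ 2, satisfies T(n) ≤ B · n^c · 4^n for all n ≥ 1. -/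
lemma choose_le_two_pow_aux (n k : ℕ) : n.choose k ≤ 2 ^ n := by
  rcases le_or_gt k n with h | h
  · calc n.choose k ≤ ∑ m ∈ Finset.range (n + 1), n.choose m :=
        Finset.single_le_sum (fun _ _ => Nat.zero_le _) (Finset.mem_range.2 (by omega))
      _ = 2 ^ n := Nat.sum_range_choose n
  · simp [Nat.choose_eq_zero_of_lt h]

/-- for every `d ≥ 1` there are constants `B, c > 0` such that
every `T : ℕ → ℝ≥0` with `T k ≤ 1` for `k ≤ 1` and
`T k ≤ binom k ⌈k/2⌉ · (T ⌊k/2⌋ + T ⌈k/2⌉ + k^d)` for all `k ≥ 2`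
satisfies `T n ≤ B·n^c·4^n` for all `n ≥ 1`.  (Here `⌊k/2⌋ = k / 2` and
`⌈k/2⌉ = (k + 1) / 2` in natural-number arithmetic.) -/
theorem classical_dc_recurrence_bound (d : ℕ) (hd : 1 ≤ d) :
    ∃ B c : ℝ, 0 < B ∧ 0 < c ∧
      ∀ T : ℕ → ℝ, (∀ k, 0 ≤ T k) → (∀ k ≤ 1, T k ≤ 1) →
        (∀ k, 2 ≤ k →
          T k ≤ (k.choose ((k + 1) / 2) : ℝ) *
            (T (k / 2) + T ((k + 1) / 2) + (k : ℝ) ^ d)) →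
        ∀ n, 1 ≤ n → T n ≤ B * (n : ℝ) ^ c * 4 ^ n := by
  refine ⟨1, ((d + 8 : ℕ) : ℝ), one_pos, by positivity, ?_⟩
  intro T hT0 hT1 hrec
  set e : ℕ := d + 8 with he
  have main : ∀ n, 1 ≤ n → T n ≤ (n : ℝ) ^ e * 4 ^ n := by
    intro n
    induction n using Nat.strong_induction_on with
    | _ n ih =>
      intro hn
      rcases le_or_gt n 1 with h1 | h2
      · have hn1 : n = 1 := by omega
        subst hn1
        have := hT1 1 le_rfl
        norm_num
        linarith
      · -- n ≥ 2
        set a := n / 2 with ha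
        set b := (n + 1) / 2 with hb
        have ha1 : 1 ≤ a := by omega
        have hb1 : 1 ≤ b := by omega
        have han : a < n := by omega
        have hbn : b < n := by omega
        have hab : a ≤ b := by omega
        have hTa := ih a han ha1
        have hTb := ih b hbn hb1
        have hn1 : (1 : ℝ) ≤ (n : ℝ) := by exact_mod_cast hn
        have hbpos : (0 : ℝ) ≤ (b : ℝ) := by positivity
        -- binomial ≤ 2^n
        have hC : (n.choose b : ℝ) ≤ 2 ^ n := by
          exact_mod_cast choose_le_two_pow_aux n b
        -- a-term ≤ b-term
        have hmonpow : ((a : ℝ)) ^ e ≤ ((b : ℝ)) ^ e :=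
          pow_le_pow_left₀ (by positivity) (by exact_mod_cast hab) e
        have hmon4 : (4 : ℝ) ^ a ≤ 4 ^ b := pow_le_pow_right₀ (by norm_num) hab
        have hTa' : T a ≤ (b : ℝ) ^ e * 4 ^ b := by
          refine hTa.trans ?_
          have h1 : ((a:ℝ))^e * 4^a ≤ ((b:ℝ))^e * 4^a :=
            mul_le_mul_of_nonneg_right hmonpow (by positivity)
          have h2 : ((b:ℝ))^e * 4^a ≤ ((b:ℝ))^e * 4^b :=
            mul_le_mul_of_nonneg_left hmon4 (by positivity)
          linarith
        -- 4^b ≤ 2^(n+1)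
        have h4b : (4 : ℝ) ^ b ≤ 2 ^ (n + 1) := by
          have : (4 : ℝ) ^ b = 2 ^ (2 * b) := by
            rw [pow_mul]; norm_num
          rw [this]
          exact pow_le_pow_right₀ (by norm_num) (by omega)
        -- b ≤ (3/4) n
        have hb34 : (b : ℝ) ≤ 3 / 4 * (n : ℝ) := by
          have h4b3n : 4 * b ≤ 3 * n := by omega
          have : (4 : ℝ) * b ≤ 3 * n := by exact_mod_cast h4b3n
          linarith
        -- b^e ≤ (3/4)^e * n^e
        have hbe : ((b : ℝ)) ^ e ≤ (3 / 4 : ℝ) ^ e * (n : ℝ) ^ e := by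
          have := pow_le_pow_left₀ hbpos hb34 e
          rwa [mul_pow] at this
        -- (3/4)^e ≤ 1/8
        have h34 : ((3 / 4 : ℝ)) ^ e ≤ 1 / 8 := by
          have h9 : ((3 / 4 : ℝ)) ^ e ≤ (3 / 4 : ℝ) ^ 9 :=
            pow_le_pow_of_le_one (by norm_num) (by norm_num) (by omega)
          have : ((3 / 4 : ℝ)) ^ 9 ≤ 1 / 8 := by norm_num
          linarith
        -- n^d ≤ n^e
        have hnd : (n : ℝ) ^ d ≤ (n : ℝ) ^ e := pow_le_pow_right₀ hn1 (by omega)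
        -- 2^n identities
        have h2n4n : ((2 : ℝ) ^ n) * 2 ^ (n + 1) = 2 * 4 ^ n := by
          rw [← pow_add]
          have : (4 : ℝ) ^ n = 2 ^ (2 * n) := by rw [pow_mul]; norm_num
          rw [this, ← pow_succ']
          ring_nf
        have h2n : (2 : ℝ) ^ n ≤ 4 ^ n / 4 := by
          have h1 : (4 : ℝ) * 2 ^ n ≤ 4 ^ n := by
            have : (4 : ℝ) * 2 ^ n = 2 ^ (n + 2) := by rw [pow_add]; ring
            rw [this]
            have : (4 : ℝ) ^ n = 2 ^ (2 * n) := by rw [pow_mul]; norm_num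
            rw [this]
            exact pow_le_pow_right₀ (by norm_num) (by omega)
          linarith
        -- main chain
        have step1 : T n ≤ (2 : ℝ) ^ n * (T a + T b + (n : ℝ) ^ d) := by
          have hrec' := hrec n (by omega)
          have hpos : (0 : ℝ) ≤ T a + T b + (n : ℝ) ^ d := by
            have := hT0 a; have := hT0 b; positivity
          calc T n ≤ (n.choose b : ℝ) * (T a + T b + (n : ℝ) ^ d) := hrec'
            _ ≤ (2 : ℝ) ^ n * (T a + T b + (n : ℝ) ^ d) :=
              mul_le_mul_of_nonneg_right hC hpos
        have step2 : T a + T b + (n : ℝ) ^ d ≤ 2 * ((b : ℝ) ^ e * 4 ^ b) + (n : ℝ) ^ d := by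
          linarith
        have hbe4 : (0:ℝ) ≤ (b:ℝ)^e := by positivity
        have step3 : (2 : ℝ) ^ n * (2 * ((b : ℝ) ^ e * 4 ^ b) + (n : ℝ) ^ d)
            ≤ 2 * (b : ℝ) ^ e * (2 * 4 ^ n) + (4 ^ n / 4) * (n : ℝ) ^ d := by
          have t1 : (2:ℝ)^n * (2 * ((b:ℝ)^e * 4^b)) ≤ 2 * (b:ℝ)^e * (2 * 4^n) := by
            have : (2:ℝ)^n * (2 * ((b:ℝ)^e * 4^b)) = 2 * (b:ℝ)^e * ((2:ℝ)^n * 4^b) := by ring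
            rw [this]
            have h44 : (2:ℝ)^n * 4^b ≤ 2 * 4^n := by
              have := mul_le_mul_of_nonneg_left h4b (show (0:ℝ) ≤ 2^n by positivity)
              calc (2:ℝ)^n * 4^b ≤ (2:ℝ)^n * 2^(n+1) := this
                _ = 2 * 4^n := h2n4n
            exact mul_le_mul_of_nonneg_left h44 (by positivity)
          have t2 : (2:ℝ)^n * (n:ℝ)^d ≤ (4^n / 4) * (n:ℝ)^d :=
            mul_le_mul_of_nonneg_right h2n (by positivity)
          nlinarith [t1, t2]
        have step4 : 2 * (b : ℝ) ^ e * (2 * 4 ^ n) + (4 ^ n / 4) * (n : ℝ) ^ d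
            ≤ (n : ℝ) ^ e * 4 ^ n := by
          have h4npos : (0:ℝ) < 4 ^ n := by positivity
          have hbig : (b:ℝ)^e ≤ (1/8) * (n:ℝ)^e := by
            calc ((b:ℝ))^e ≤ (3/4:ℝ)^e * (n:ℝ)^e := hbe
              _ ≤ (1/8) * (n:ℝ)^e :=
                mul_le_mul_of_nonneg_right h34 (by positivity)
          nlinarith [hbig, hnd, h4npos, pow_nonneg (le_trans zero_le_one hn1) e]
        calc T n ≤ (2 : ℝ) ^ n * (T a + T b + (n : ℝ) ^ d) := step1
          _ ≤ (2 : ℝ) ^ n * (2 * ((b : ℝ) ^ e * 4 ^ b) + (n : ℝ) ^ d) :=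
            mul_le_mul_of_nonneg_left step2 (by positivity)
          _ ≤ 2 * (b : ℝ) ^ e * (2 * 4 ^ n) + (4 ^ n / 4) * (n : ℝ) ^ d := step3
          _ ≤ (n : ℝ) ^ e * 4 ^ n := step4
  intro n hn
  rw [one_mul, Real.rpow_natCast]
  exact main n hn
end
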